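/- Let (X₁, X₂) be a pair of identically distributed log-normal random variables, X₁ ≍ X₂ ~ LN(μ, σ²), and let S⁻ be their counter-monotonic sum. Then for every p ∈ (0,1), VaR_p[S⁻] = e^{μ + σ Φ^{-1}((1−p)/2)} + e^{μ + σ Φ^{-1}((1+p)/2)}, where Φ^{-1} is the inverse of the standard normal cdf. -/

import Mathlib

open MeasureTheory ProbabilityTheory Set

noncomputable section

variable {Ω : Type*} [MeasurableSpace Ω]

/-- The cumulative distribution function of the random variable `X` under `P`. -/
def rvCdf (P : Measure Ω) (X : Ω → ℝ) : ℝ → ℝ := fun x => (P {ω | X ω ≤ x}).toReal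

/-- The survival function `x ↦ P(X > x)`. -/
def rvSurv (P : Measure Ω) (X : Ω → ℝ) : ℝ → ℝ := fun x => (P {ω | x < X ω}).toReal

/-- The left inverse `F⁻¹(p) = inf {x | F x ≥ p}` of a cdf `F`. -/
def leftInv (F : ℝ → ℝ) (p : ℝ) : ℝ := sInf {x | p ≤ F x}

/-- The right inverse `F⁻¹⁺(p) = sup {x | F x ≤ p}` of a cdf `F`. -/
def rightInv (F : ℝ → ℝ) (p : ℝ) : ℝ := sSup {x | F x ≤ p}

/-- `g : [0,1] → [0,1]` is a distortion function: nondecreasing with `g 0 = 0`, `g 1 = 1`. -/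
def IsDistortion (g : ℝ → ℝ) : Prop :=
  MonotoneOn g (Icc 0 1) ∧ g 0 = 0 ∧ g 1 = 1 ∧ ∀ q ∈ Icc (0:ℝ) 1, g q ∈ Icc (0:ℝ) 1

/-- The dual distortion function `ḡ(q) = 1 - g(1 - q)`. -/
def dualDistortion (g : ℝ → ℝ) : ℝ → ℝ := fun q => 1 - g (1 - q)

/-- The distortion risk measure
`ρ_g[X] = -∫_{-∞}^0 (1 - g(P(X > x))) dx + ∫_0^∞ g(P(X > x)) dx`. -/
def rho (P : Measure Ω) (g : ℝ → ℝ) (X : Ω → ℝ) : ℝ :=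
  (- ∫ x in Iio (0:ℝ), (1 - g (rvSurv P X x))) + ∫ x in Ioi (0:ℝ), g (rvSurv P X x)

/-- The two integrals defining the distortion risk measure `ρ_g[X]` are finite. -/
def RhoFinite (P : Measure Ω) (g : ℝ → ℝ) (X : Ω → ℝ) : Prop :=
  IntegrableOn (fun x => 1 - g (rvSurv P X x)) (Iio (0:ℝ)) volume ∧
  IntegrableOn (fun x => g (rvSurv P X x)) (Ioi (0:ℝ)) volume

/-- `U` is uniformly distributed on `[0,1]`. -/
def IsUniform01 (P : Measure Ω) (U : Ω → ℝ) : Prop :=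
  Measurable U ∧ Measure.map U P = volume.restrict (Icc (0:ℝ) 1)

/-- The counter-monotonic sum `S⁻ = F_{X₁}⁻¹(U) + F_{X₂}⁻¹(1 - U)`. -/
def cmSum (P : Measure Ω) (X₁ X₂ : Ω → ℝ) (U : Ω → ℝ) : Ω → ℝ :=
  fun ω => leftInv (rvCdf P X₁) (U ω) + leftInv (rvCdf P X₂) (1 - U ω)

/-- `X` is symmetric: for some `m`, `P(X ≤ m - x) = P(X ≥ m + x)` for all `x`. -/
def IsSymmetricRV (P : Measure Ω) (X : Ω → ℝ) : Prop :=
  ∃ m : ℝ, ∀ x : ℝ, P {ω | X ω ≤ m - x} = P {ω | m + x ≤ X ω}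

/-- Dispersive order `X ≤_disp Y`. -/
def DispLE (P : Measure Ω) (X Y : Ω → ℝ) : Prop :=
  ∀ u v : ℝ, 0 < v → v ≤ u → u < 1 →
    leftInv (rvCdf P X) u - leftInv (rvCdf P X) v ≤
      leftInv (rvCdf P Y) u - leftInv (rvCdf P Y) v

/-- The cdf of `X` is continuous and strictly increasing on `(F⁻¹⁺(0), F⁻¹(1))`. -/
def CdfRegular (P : Measure Ω) (X : Ω → ℝ) : Prop :=
  ContinuousOn (rvCdf P X) (Ioo (rightInv (rvCdf P X) 0) (leftInv (rvCdf P X) 1)) ∧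
  StrictMonoOn (rvCdf P X) (Ioo (rightInv (rvCdf P X) 0) (leftInv (rvCdf P X) 1))

/-- Value-at-Risk `VaR_p[X] = F_X⁻¹(p)`. -/
def VaR (P : Measure Ω) (X : Ω → ℝ) (p : ℝ) : ℝ := leftInv (rvCdf P X) p

/-- Tail-Value-at-Risk `TVaR_p[X] = (1/(1-p)) ∫_p^1 F_X⁻¹(q) dq`. -/
def TVaR (P : Measure Ω) (X : Ω → ℝ) (p : ℝ) : ℝ :=
  (1 - p)⁻¹ * ∫ q in p..1, leftInv (rvCdf P X) q

/-- Left-Tail-Value-at-Risk `LTVaR_p[X] = (1/p) ∫_0^p F_X⁻¹(q) dq`. -/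
def LTVaR (P : Measure Ω) (X : Ω → ℝ) (p : ℝ) : ℝ :=
  p⁻¹ * ∫ q in (0:ℝ)..p, leftInv (rvCdf P X) q

/-- The standard normal cdf `Φ`. -/
def stdNormCdf : ℝ → ℝ := fun x => ((gaussianReal 0 1) (Iic x)).toReal

/-- The inverse `Φ⁻¹` of the standard normal cdf. -/
def stdNormInv : ℝ → ℝ := fun p => sInf {x | p ≤ stdNormCdf x}

/-- The Wang transform distortion function at level `p`. -/
def wangG (p : ℝ) : ℝ → ℝ := fun q => stdNormCdf (stdNormInv q + stdNormInv p)

/-- The Wang transform risk measure at level `p`. -/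
def WT (P : Measure Ω) (X : Ω → ℝ) (p : ℝ) : ℝ := rho P (wangG p) X

/-- `X ~ N(μ, σ²)`. -/
def IsNormalRV (P : Measure Ω) (X : Ω → ℝ) (μ σ : ℝ) : Prop :=
  Measurable X ∧ Measure.map X P = gaussianReal μ (⟨σ ^ 2, sq_nonneg σ⟩ : NNReal)

/-- `X ~ LN(μ, σ²)`, i.e. `X` is distributed as `exp Z` with `Z ~ N(μ, σ²)`. -/
def IsLogNormalRV (P : Measure Ω) (X : Ω → ℝ) (μ σ : ℝ) : Prop :=
  Measurable X ∧
    Measure.map X P = Measure.map Real.exp (gaussianReal μ (⟨σ ^ 2, sq_nonneg σ⟩ : NNReal))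

/-- `X ~ Student(ν)`: density proportional to `(1 + x²/ν)^(-(ν+1)/2)`. -/
def IsStudentRV (P : Measure Ω) (X : Ω → ℝ) (ν : ℝ) : Prop :=
  Measurable X ∧ ∃ c : ℝ, 0 < c ∧
    Measure.map X P =
      volume.withDensity (fun x => ENNReal.ofReal (c * (1 + x ^ 2 / ν) ^ (-((ν + 1) / 2))))

/-- Extension of a distortion function to `ℝ` by constants. -/
def gExt (g : ℝ → ℝ) : ℝ → ℝ := fun q => if q ≤ 0 then 0 else if 1 ≤ q then 1 else g q

open Classical in
/-- The Lebesgue–Stieltjes measure `dg` associated with (the right-continuous modification of)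
the extension of a distortion function `g` to `ℝ`. -/
def lsMeasure (g : ℝ → ℝ) : Measure ℝ :=
  if h : Monotone (gExt g) then h.stieltjesFunction.measure else 0

/-! With `z = Φ⁻¹(U)` and the symmetry `Φ⁻¹(1 - u) = -Φ⁻¹(u)`, the counter-monotonic sum is
`S⁻ = e^{μ+σz} + e^{μ-σz} = 2 e^μ cosh(σ z)`. Since `cosh` is even and increasing on `[0, ∞)`,
for `t ≥ 0` the event `S⁻ ≤ 2 e^μ cosh(σ t)` is `Φ(-t) ≤ U ≤ Φ(t)` up to a null set, of
probability `2 Φ(t) - 1`. This is continuous and strictly increasing in `t`, so the `p`-quantile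
of `S⁻` is attained at `t = Φ⁻¹((1 + p) / 2)`, and `2 e^μ cosh(σ t)` is the claimed sum. -/

open Real Filter Topology

namespace ProbabilityTheory

theorem continuous_cdf (μ : Measure ℝ) [IsProbabilityMeasure μ] [NullSingletonClass μ] :
    Continuous (cdf μ) := by
  refine continuous_iff_continuousAt.2 fun x => ?_
  rw [(monotone_cdf μ).continuousAt_iff_leftLim_eq_rightLim, (cdf μ).rightLim_eq]
  have h := (cdf μ).measure_singleton x
  rw [measure_cdf, measure_singleton, eq_comm, ENNReal.ofReal_eq_zero, sub_nonpos] at h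
  exact le_antisymm ((monotone_cdf μ).leftLim_le le_rfl) h

theorem strictMono_cdf (μ : Measure ℝ) [IsProbabilityMeasure μ] (hμ : volume ≪ μ) :
    StrictMono (cdf μ) := by
  refine fun a b hab => lt_of_le_of_ne (monotone_cdf μ hab.le) fun h => ?_
  have hIoc := (cdf μ).measure_Ioc a b
  rw [measure_cdf, h, sub_self, ENNReal.ofReal_zero] at hIoc
  have := hμ hIoc
  rw [Real.volume_Ioc, ENNReal.ofReal_eq_zero] at this
  linarith

end ProbabilityTheory

section LeftInv

variable {F : ℝ → ℝ} {p s : ℝ}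

theorem leftInv_eq_of_forall_le_iff (h : ∀ x, p ≤ F x ↔ s ≤ x) : leftInv F p = s := by
  rw [leftInv, show {x | p ≤ F x} = Ici s from Set.ext h, csInf_Ici]

theorem leftInv_eq_of_comp_eq {G c : ℝ → ℝ} {a b : ℝ} (hF : Monotone F) (hc : ContinuousAt c b)
    (hab : a < b) (hFc : ∀ t ∈ Icc a b, F (c t) = G t) (hG : StrictMonoOn G (Icc a b)) :
    leftInv F (G b) = c b := by
  have hb : b ∈ Icc a b := ⟨hab.le, le_rfl⟩
  refine leftInv_eq_of_forall_le_iff fun x => ⟨fun hx => ?_, fun hx => ?_⟩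
  · by_contra! hxb
    have hnear : ∀ᶠ t in 𝓝[<] b, x < c t ∧ a < t ∧ t < b := by
      filter_upwards [nhdsWithin_le_nhds (hc.eventually (lt_mem_nhds hxb)),
        nhdsWithin_le_nhds (lt_mem_nhds hab), self_mem_nhdsWithin] with t h₁ h₂ h₃
      exact ⟨h₁, h₂, h₃⟩
    obtain ⟨t, hxt, hat, htb⟩ := hnear.exists
    have ht : t ∈ Icc a b := ⟨hat.le, le_of_lt htb⟩
    have := hF hxt.le
    rw [hFc t ht] at this
    exact (hG ht hb htb).not_ge (hx.trans this)
  · exact (hFc b hb).symm.le.trans (hF hx)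

end LeftInv

namespace ProbabilityTheory

variable (μ : Measure ℝ) {p : ℝ}

theorem bddBelow_setOf_le_cdf (hp : 0 < p) : BddBelow {x | p ≤ cdf μ x} := by
  obtain ⟨a, ha⟩ := ((tendsto_cdf_atBot μ).eventually (eventually_lt_nhds hp)).exists
  exact ⟨a, fun x hx => le_of_lt ((monotone_cdf μ).reflect_lt (ha.trans_le hx))⟩

theorem cdf_leftInv_cdf [IsProbabilityMeasure μ] [NullSingletonClass μ] (hp : p ∈ Ioo 0 1) :
    cdf μ (leftInv (cdf μ) p) = p := by
  have hbdd := bddBelow_setOf_le_cdf μ hp.1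
  have hne : {x | p ≤ cdf μ x}.Nonempty :=
    ((tendsto_cdf_atTop μ).eventually (eventually_ge_nhds hp.2)).exists
  have hcont := continuous_cdf μ
  refine le_antisymm ?_ ((isClosed_le continuous_const hcont).csInf_mem hne hbdd)
  refine le_of_tendsto (x := 𝓝[<] leftInv (cdf μ) p)
    (hcont.continuousAt.tendsto.mono_left nhdsWithin_le_nhds)
    (eventually_nhdsWithin_of_forall fun x hx => ?_)
  exact le_of_lt (not_le.1 fun hpx => not_le.2 hx (csInf_le hbdd hpx))

theorem le_cdf_iff_leftInv_le [IsProbabilityMeasure μ] [NullSingletonClass μ] (hp : p ∈ Ioo 0 1)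
    {x : ℝ} : p ≤ cdf μ x ↔ leftInv (cdf μ) p ≤ x := by
  refine ⟨fun h => csInf_le (bddBelow_setOf_le_cdf μ hp.1) h, fun h => ?_⟩
  exact (cdf_leftInv_cdf μ hp).symm.le.trans (monotone_cdf μ h)

end ProbabilityTheory

theorem stdNormCdf_eq_cdf : stdNormCdf = cdf (gaussianReal 0 1) := by
  ext x
  rw [cdf_eq_real]
  rfl

theorem stdNormInv_eq_leftInv : stdNormInv = leftInv (cdf (gaussianReal 0 1)) := by
  rw [← stdNormCdf_eq_cdf]
  rfl

theorem strictMono_stdNormCdf : StrictMono stdNormCdf := by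
  rw [stdNormCdf_eq_cdf]
  exact strictMono_cdf _ (gaussianReal_absolutelyContinuous' 0 one_ne_zero)

theorem stdNormCdf_neg (x : ℝ) : stdNormCdf (-x) = 1 - stdNormCdf x := by
  have := nullSingletonClass_gaussianReal (μ := 0) one_ne_zero
  have hsymm : gaussianReal 0 1 (Iic (-x)) = gaussianReal 0 1 (Iio x)ᶜ := by
    conv_lhs => rw [← neg_zero, ← gaussianReal_map_neg]
    rw [Measure.map_apply measurable_neg measurableSet_Iic, compl_Iio]
    congr 1
    ext y
    simp
  rw [stdNormCdf, stdNormCdf, hsymm, prob_compl_eq_one_sub measurableSet_Iio,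
    measure_congr Iio_ae_eq_Iic, ENNReal.toReal_sub_of_le prob_le_one ENNReal.one_ne_top,
    ENNReal.toReal_one]

theorem stdNormCdf_zero : stdNormCdf 0 = 1 / 2 := by
  have h := stdNormCdf_neg 0
  rw [neg_zero] at h
  linarith

section StdNormInv

variable {p : ℝ}

theorem stdNormCdf_stdNormInv (hp : p ∈ Ioo 0 1) : stdNormCdf (stdNormInv p) = p := by
  have := nullSingletonClass_gaussianReal (μ := 0) one_ne_zero
  rw [stdNormCdf_eq_cdf, stdNormInv_eq_leftInv, cdf_leftInv_cdf _ hp]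

theorem le_stdNormCdf_iff (hp : p ∈ Ioo 0 1) {x : ℝ} : p ≤ stdNormCdf x ↔ stdNormInv p ≤ x := by
  have := nullSingletonClass_gaussianReal (μ := 0) one_ne_zero
  rw [stdNormCdf_eq_cdf, stdNormInv_eq_leftInv, le_cdf_iff_leftInv_le _ hp]

theorem stdNormInv_one_sub (hp : p ∈ Ioo 0 1) : stdNormInv (1 - p) = -stdNormInv p := by
  refine strictMono_stdNormCdf.injective ?_
  rw [stdNormCdf_neg, stdNormCdf_stdNormInv hp,
    stdNormCdf_stdNormInv ⟨by linarith [hp.2], by linarith [hp.1]⟩]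

theorem stdNormInv_pos (hp : p ∈ Ioo (1 / 2) 1) : 0 < stdNormInv p := by
  rw [← not_le, ← le_stdNormCdf_iff ⟨by linarith [hp.1], hp.2⟩, stdNormCdf_zero, not_le]
  exact hp.1

theorem abs_stdNormInv_le_iff (hp : p ∈ Ioo 0 1) (t : ℝ) :
    |stdNormInv p| ≤ t ↔ p ∈ Icc (stdNormCdf (-t)) (stdNormCdf t) := by
  rw [abs_le, ← le_stdNormCdf_iff hp, ← strictMono_stdNormCdf.le_iff_le,
    stdNormCdf_stdNormInv hp, mem_Icc]

end StdNormInv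

theorem exp_add_add_exp_sub (a b : ℝ) : exp (a + b) + exp (a - b) = 2 * exp a * cosh b := by
  rw [cosh_eq, exp_add, exp_sub, exp_neg, div_eq_mul_inv]
  ring

theorem gaussianReal_eq_map_affine (μ σ : ℝ) :
    gaussianReal μ ⟨σ ^ 2, sq_nonneg σ⟩ = (gaussianReal 0 1).map (fun t => μ + σ * t) := by
  change _ = (gaussianReal 0 1).map ((μ + ·) ∘ (σ * ·))
  rw [← Measure.map_map (measurable_const_add μ) (measurable_const_mul σ),
    gaussianReal_map_const_mul, gaussianReal_map_const_add]
  simp only [mul_zero, zero_add, mul_one]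
  rfl

section LogNormal

variable {P : Measure Ω} {X : Ω → ℝ} {μ σ : ℝ}

theorem IsLogNormalRV.rvCdf_eq (hX : IsLogNormalRV P X μ σ) (x : ℝ) :
    rvCdf P X x = (gaussianReal 0 1).real {t | exp (μ + σ * t) ≤ x} := by
  change (P (X ⁻¹' Iic x)).toReal = _
  rw [← Measure.map_apply hX.1 measurableSet_Iic, hX.2, gaussianReal_eq_map_affine,
    Measure.map_map measurable_exp (by fun_prop),
    Measure.map_apply (measurable_exp.comp (by fun_prop)) measurableSet_Iic]
  rfl

theorem IsLogNormalRV.leftInv_rvCdf (hX : IsLogNormalRV P X μ σ) (hσ : 0 < σ) {u : ℝ}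
    (hu : u ∈ Ioo 0 1) : leftInv (rvCdf P X) u = exp (μ + σ * stdNormInv u) := by
  refine leftInv_eq_of_forall_le_iff fun x => ?_
  rw [hX.rvCdf_eq]
  rcases le_or_gt x 0 with hx | hx
  · have hempty : {t | exp (μ + σ * t) ≤ x} = ∅ :=
      eq_empty_of_forall_notMem fun t ht => (hx.trans_lt (exp_pos _)).not_ge ht
    rw [hempty, measureReal_empty]
    exact iff_of_false (not_le.2 hu.1) (not_le.2 (hx.trans_lt (exp_pos _)))
  · have hIic : {t | exp (μ + σ * t) ≤ x} = Iic ((log x - μ) / σ) := by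
      ext t
      change exp (μ + σ * t) ≤ x ↔ t ≤ (log x - μ) / σ
      rw [← le_log_iff_exp_le hx, le_div_iff₀ hσ]
      constructor <;> intro h <;> linarith
    rw [hIic]
    change u ≤ stdNormCdf _ ↔ _
    rw [le_stdNormCdf_iff hu, le_div_iff₀ hσ, ← le_log_iff_exp_le hx]
    constructor <;> intro h <;> linarith

end LogNormal

section Uniform

variable {P : Measure Ω} {U : Ω → ℝ}

theorem IsUniform01.ae_mem_Ioo (hU : IsUniform01 P U) : ∀ᵐ ω ∂P, U ω ∈ Ioo 0 1 := by
  refine (ae_map_iff hU.1.aemeasurable measurableSet_Ioo).1 ?_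
  rw [hU.2, ← Measure.restrict_congr_set Ioo_ae_eq_Icc]
  exact ae_restrict_mem measurableSet_Ioo

theorem IsUniform01.measureReal_preimage_Icc (hU : IsUniform01 P U) {a b : ℝ} (ha : 0 ≤ a)
    (hab : a ≤ b) (hb : b ≤ 1) : P.real (U ⁻¹' Icc a b) = b - a := by
  rw [measureReal_def, ← Measure.map_apply hU.1 measurableSet_Icc, hU.2,
    Measure.restrict_apply measurableSet_Icc, inter_eq_left.2 (Icc_subset_Icc ha hb),
    Real.volume_Icc, ENNReal.toReal_ofReal (sub_nonneg.2 hab)]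

end Uniform

theorem rvCdf_mono (P : Measure Ω) [IsFiniteMeasure P] (X : Ω → ℝ) : Monotone (rvCdf P X) :=
  fun _ _ hxy => ENNReal.toReal_mono (measure_ne_top _ _) (measure_mono fun _ hω => le_trans hω hxy)

section CounterMonotonicLogNormal

variable {P : Measure Ω} {X₁ X₂ U : Ω → ℝ} {μ σ : ℝ}

theorem cmSum_eq_of_isLogNormalRV (h₁ : IsLogNormalRV P X₁ μ σ) (h₂ : IsLogNormalRV P X₂ μ σ)
    (hσ : 0 < σ) {ω : Ω} (hω : U ω ∈ Ioo 0 1) :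
    cmSum P X₁ X₂ U ω = 2 * exp μ * cosh (σ * stdNormInv (U ω)) := by
  have hω' : 1 - U ω ∈ Ioo 0 1 := ⟨by linarith [hω.2], by linarith [hω.1]⟩
  rw [cmSum, h₁.leftInv_rvCdf hσ hω, h₂.leftInv_rvCdf hσ hω', stdNormInv_one_sub hω,
    mul_neg, ← sub_eq_add_neg, exp_add_add_exp_sub]

theorem rvCdf_cmSum_of_isLogNormalRV (h₁ : IsLogNormalRV P X₁ μ σ) (h₂ : IsLogNormalRV P X₂ μ σ)
    (hσ : 0 < σ) (hU : IsUniform01 P U) {t : ℝ} (ht : 0 ≤ t) :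
    rvCdf P (cmSum P X₁ X₂ U) (2 * exp μ * cosh (σ * t)) = 2 * stdNormCdf t - 1 := by
  have hset : {ω | cmSum P X₁ X₂ U ω ≤ 2 * exp μ * cosh (σ * t)} =ᵐ[P]
      U ⁻¹' Icc (stdNormCdf (-t)) (stdNormCdf t) := by
    rw [eventuallyEq_set]
    filter_upwards [hU.ae_mem_Ioo] with ω hω
    change cmSum P X₁ X₂ U ω ≤ _ ↔ U ω ∈ Icc _ _
    rw [cmSum_eq_of_isLogNormalRV h₁ h₂ hσ hω, mul_le_mul_iff_right₀ (by positivity),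
      cosh_le_cosh, abs_mul, abs_mul, abs_of_pos hσ, abs_of_nonneg ht, mul_le_mul_iff_right₀ hσ,
      abs_stdNormInv_le_iff hω]
  have hΦ : ∀ x, stdNormCdf x ∈ Icc 0 1 := fun x => by
    rw [stdNormCdf_eq_cdf]
    exact ⟨cdf_nonneg _ x, cdf_le_one _ x⟩
  rw [rvCdf, measure_congr hset, ← measureReal_def,
    hU.measureReal_preimage_Icc (hΦ _).1 (strictMono_stdNormCdf.monotone (by linarith)) (hΦ t).2,
    stdNormCdf_neg]
  ring

end CounterMonotonicLogNormal

/-- VaR of the counter-monotonic sum of two identically distributed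
log-normal risks. -/
theorem lognormal_cm_sum_VaR
    (P : Measure Ω) [IsProbabilityMeasure P]
    (X₁ X₂ U : Ω → ℝ) (μ σ : ℝ) (hσ : 0 < σ)
    (h₁ : IsLogNormalRV P X₁ μ σ) (h₂ : IsLogNormalRV P X₂ μ σ)
    (hU : IsUniform01 P U)
    (p : ℝ) (hp : p ∈ Ioo (0:ℝ) 1) :
    VaR P (cmSum P X₁ X₂ U) p =
      Real.exp (μ + σ * stdNormInv ((1 - p) / 2)) +
        Real.exp (μ + σ * stdNormInv ((1 + p) / 2)) := by
  have hv : (1 + p) / 2 ∈ Ioo (1 / 2) 1 := ⟨by linarith [hp.1], by linarith [hp.2]⟩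
  have hv' : (1 + p) / 2 ∈ Ioo 0 1 := ⟨by linarith [hv.1], hv.2⟩
  have hquantile := leftInv_eq_of_comp_eq (G := fun t => 2 * stdNormCdf t - 1)
    (rvCdf_mono P _) (by fun_prop) (stdNormInv_pos hv)
    (fun t ht => rvCdf_cmSum_of_isLogNormalRV h₁ h₂ hσ hU ht.1)
    (fun a _ b _ hab => by linarith [strictMono_stdNormCdf hab])
  rw [stdNormCdf_stdNormInv hv', show 2 * ((1 + p) / 2) - 1 = p by ring] at hquantile
  rw [VaR, hquantile, show (1 - p) / 2 = 1 - (1 + p) / 2 by ring, stdNormInv_one_sub hv',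
    mul_neg, ← sub_eq_add_neg, add_comm (exp _), exp_add_add_exp_sub]
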